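/- Suppose the d-layer ReLU network G satisfies the R2WDC with constant ε > 0 such that max(2dε, 10ε) < 1. Then for all nonzero x, y ∈ ℝ^k and all i ∈ [d]: ‖G_i(x) − G_i(y)‖ ≤ (√(1/2 + ε) + √(2(2ε + θ_{i−1}))) ‖G_{i−1}(x) − G_{i−1}(y)‖, where θ_{i−1} = ∠(G_{i−1}(x), G_{i−1}(y)) is the angle between G_{i−1}(x) and G_{i−1}(y) (these vectors are nonzero under the stated assumptions, so the angle is well-defined). -/
import Mathlib


open scoped BigOperators
open Real MeasureTheory ProbabilityTheory Filter
open scoped Matrix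

noncomputable section

namespace R2WDCFormal

/-- Euclidean inner product on `Fin n → ℝ`. -/
def dotp {n : ℕ} (r s : Fin n → ℝ) : ℝ := ∑ i, r i * s i

/-- Euclidean norm on `Fin n → ℝ`. -/
def vnorm {n : ℕ} (r : Fin n → ℝ) : ℝ := Real.sqrt (dotp r r)

/-- Angle between two vectors. -/
def ang {n : ℕ} (r s : Fin n → ℝ) : ℝ := Real.arccos (dotp r s / (vnorm r * vnorm s))

/-- Outer product of two vectors, as a matrix. -/
def outer {n : ℕ} (u v : Fin n → ℝ) : Matrix (Fin n) (Fin n) ℝ := Matrix.of fun i j => u i * v j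

/-- The matrix sending `r̂ ↦ ŝ`, `ŝ ↦ r̂` with kernel `span{r,s}ᗮ`. -/
def Mswap {n : ℕ} (r s : Fin n → ℝ) : Matrix (Fin n) (Fin n) ℝ :=
  outer ((vnorm ((vnorm r)⁻¹ • r + (vnorm s)⁻¹ • s))⁻¹ • ((vnorm r)⁻¹ • r + (vnorm s)⁻¹ • s))
        ((vnorm ((vnorm r)⁻¹ • r + (vnorm s)⁻¹ • s))⁻¹ • ((vnorm r)⁻¹ • r + (vnorm s)⁻¹ • s)) -
  outer ((vnorm ((vnorm r)⁻¹ • r - (vnorm s)⁻¹ • s))⁻¹ • ((vnorm r)⁻¹ • r - (vnorm s)⁻¹ • s))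
        ((vnorm ((vnorm r)⁻¹ • r - (vnorm s)⁻¹ • s))⁻¹ • ((vnorm r)⁻¹ • r - (vnorm s)⁻¹ • s))

/-- The matrix `Q_{r,s}`. -/
def Qmat {n : ℕ} (r s : Fin n → ℝ) : Matrix (Fin n) (Fin n) ℝ :=
  if r = 0 ∨ s = 0 then 0
  else ((π - ang r s) / (2 * π)) • (1 : Matrix (Fin n) (Fin n) ℝ) +
    (Real.sin (ang r s) / (2 * π)) • Mswap r s

/-- `W_{+,x} = diag(Wx > 0) W`. -/
def Wplus {m n : ℕ} (W : Matrix (Fin m) (Fin n) ℝ) (x : Fin n → ℝ) : Matrix (Fin m) (Fin n) ℝ :=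
  Matrix.of fun i j => if 0 < W.mulVec x i then W i j else 0

/-- Entrywise ReLU. -/
def reluVec {n : ℕ} (v : Fin n → ℝ) : Fin n → ℝ := fun i => max (v i) 0

/-- Sub-network `G_j` of the ReLU network with layer sizes `nn` and weights `W`. -/
def subnet (nn : ℕ → ℕ) (W : ∀ i : ℕ, Matrix (Fin (nn (i + 1))) (Fin (nn i)) ℝ) :
    ∀ j : ℕ, (Fin (nn 0) → ℝ) → Fin (nn j) → ℝ
  | 0, x => x
  | j + 1, x => reluVec ((W j).mulVec (subnet nn W j x))

/-- `Λ_{j,x} = W_{j,+,x} ⋯ W_{1,+,x}`. -/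
def LambdaMat (nn : ℕ → ℕ) (W : ∀ i : ℕ, Matrix (Fin (nn (i + 1))) (Fin (nn i)) ℝ) :
    ∀ j : ℕ, (Fin (nn 0) → ℝ) → Matrix (Fin (nn j)) (Fin (nn 0)) ℝ
  | 0, _ => 1
  | j + 1, x => Wplus (W j) (subnet nn W j x) * LambdaMat nn W j x

/-- Range Restricted Weight Distribution Condition with constant `ε` of a `d`-layer network. -/
def R2WDCond (nn : ℕ → ℕ) (d : ℕ)
    (W : ∀ i : ℕ, Matrix (Fin (nn (i + 1))) (Fin (nn i)) ℝ) (ε : ℝ) : Prop :=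
  ∀ i < d, ∀ x y x₁ x₂ x₃ x₄ : Fin (nn 0) → ℝ,
    |dotp (((Wplus (W i) (subnet nn W i x))ᵀ * Wplus (W i) (subnet nn W i y) -
        Qmat (subnet nn W i x) (subnet nn W i y)).mulVec
        (subnet nn W i x₁ - subnet nn W i x₂)) (subnet nn W i x₃ - subnet nn W i x₄)| ≤
      ε * vnorm (subnet nn W i x₁ - subnet nn W i x₂) * vnorm (subnet nn W i x₃ - subnet nn W i x₄)

/-- Range Restricted Isometry Condition of `A` with respect to the network, with constant `ε`. -/
def RRICond (nn : ℕ → ℕ) (d : ℕ)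
    (W : ∀ i : ℕ, Matrix (Fin (nn (i + 1))) (Fin (nn i)) ℝ) {mm : ℕ}
    (A : Matrix (Fin mm) (Fin (nn d)) ℝ) (ε : ℝ) : Prop :=
  ∀ x₁ x₂ x₃ x₄ : Fin (nn 0) → ℝ,
    |dotp ((Aᵀ * A - 1).mulVec (subnet nn W d x₁ - subnet nn W d x₂))
        (subnet nn W d x₃ - subnet nn W d x₄)| ≤
      ε * vnorm (subnet nn W d x₁ - subnet nn W d x₂) * vnorm (subnet nn W d x₃ - subnet nn W d x₄)

/-- The angle-distortion function `g`. -/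
def gAngle (θ : ℝ) : ℝ := Real.arccos (((π - θ) * Real.cos θ + Real.sin θ) / π)

/-- The deterministic vector field `h̃_{x,y}`. -/
def htilde {k : ℕ} (d : ℕ) (x y : Fin k → ℝ) : Fin k → ℝ :=
  (1 / 2 ^ d : ℝ) • ((∏ i ∈ Finset.range d, (π - gAngle^[i] (ang x y)) / π) • y +
    (∑ i ∈ Finset.Ico 1 d, Real.sin (gAngle^[i] (ang x y)) / π *
      ∏ j ∈ Finset.Ico (i + 1) d, (π - gAngle^[j] (ang x y)) / π) •
      (vnorm y • (vnorm x)⁻¹ • x))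

/-- Spectral (ℓ²-operator) norm of a matrix. -/
def specNorm {a b : ℕ} (M : Matrix (Fin a) (Fin b) ℝ) : ℝ :=
  ⨆ v : {v : Fin b → ℝ // vnorm v ≤ 1}, vnorm (M.mulVec v)

/-- The entries of the random matrix `W` are i.i.d. `N(0, v)`. -/
def IIDGaussian {Ω : Type*} [MeasurableSpace Ω] (μ : Measure Ω) {a b : ℕ}
    (W : Ω → Fin a → Fin b → ℝ) (v : NNReal) : Prop :=
  Measure.map W μ = Measure.pi fun _ : Fin a => Measure.pi fun _ : Fin b => gaussianReal 0 v

/-- The noise factor `ω`. -/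
def omegaNoise (nn : ℕ → ℕ) (d mm : ℕ) : ℝ :=
  2 / 2 ^ ((d : ℝ) / 2) * Real.sqrt (13 / 12) *
    Real.sqrt ((nn 0 : ℝ) / mm * Real.log (5 * ∏ j ∈ Finset.Icc 1 d, Real.exp 1 * nn j / nn 0))

/-- Clarke subdifferential of `f` at `x`: the convex hull of all limits of gradients of `f`
at nearby differentiability points. -/
def clarkeSubdiff {k : ℕ} (f : (Fin k → ℝ) → ℝ) (x : Fin k → ℝ) : Set (Fin k → ℝ) :=
  convexHull ℝ {v : Fin k → ℝ | ∃ u : ℕ → Fin k → ℝ,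
    (∀ t, DifferentiableAt ℝ f (u t)) ∧
    Tendsto u atTop (nhds x) ∧
    Tendsto (fun t => fun i => fderiv ℝ f (u t) (Pi.single i 1)) atTop (nhds v)}

/-- The compressed sensing objective `f_cs`. -/
def fcs (nn : ℕ → ℕ) (d : ℕ) (W : ∀ i : ℕ, Matrix (Fin (nn (i + 1))) (Fin (nn i)) ℝ)
    {mm : ℕ} (A : Matrix (Fin mm) (Fin (nn d)) ℝ) (b : Fin mm → ℝ)
    (x : Fin (nn 0) → ℝ) : ℝ :=
  1 / 2 * vnorm (b - A.mulVec (subnet nn W d x)) ^ 2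

section Helpers
variable {n m : ℕ}

variable {n m : ℕ}

lemma dotp_comm (r s : Fin n → ℝ) : dotp r s = dotp s r := by
  simp [dotp, mul_comm]

lemma dotp_self_nonneg (r : Fin n → ℝ) : 0 ≤ dotp r r :=
  Finset.sum_nonneg fun i _ => mul_self_nonneg _

lemma dotp_self_pos {r : Fin n → ℝ} (hr : r ≠ 0) : 0 < dotp r r := by
  rcases (dotp_self_nonneg r).lt_or_eq with h | h
  · exact h
  · exfalso; apply hr; funext i
    have h2 := (Finset.sum_eq_zero_iff_of_nonneg
      (fun i _ => mul_self_nonneg (r i))).mp h.symm i (Finset.mem_univ i)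
    simpa using mul_self_eq_zero.mp h2

lemma vnorm_nonneg (r : Fin n → ℝ) : 0 ≤ vnorm r := Real.sqrt_nonneg _

lemma vnorm_mul_self (r : Fin n → ℝ) : vnorm r * vnorm r = dotp r r :=
  Real.mul_self_sqrt (dotp_self_nonneg r)

lemma dotp_add_left (a b c : Fin n → ℝ) : dotp (a + b) c = dotp a c + dotp b c := by
  simp [dotp, add_mul, Finset.sum_add_distrib]

lemma dotp_sub_left (a b c : Fin n → ℝ) : dotp (a - b) c = dotp a c - dotp b c := by
  simp [dotp, sub_mul, Finset.sum_sub_distrib]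

lemma dotp_sub_right (a b c : Fin n → ℝ) : dotp a (b - c) = dotp a b - dotp a c := by
  simp [dotp, mul_sub, Finset.sum_sub_distrib]

lemma dotp_smul_left (t : ℝ) (a b : Fin n → ℝ) : dotp (t • a) b = t * dotp a b := by
  simp [dotp, Finset.mul_sum, mul_assoc]

lemma dotp_sq_le (a b : Fin n → ℝ) : dotp a b ^ 2 ≤ dotp a a * dotp b b := by
  have h := Finset.sum_mul_sq_le_sq_mul_sq Finset.univ a b
  simpa [dotp, pow_two] using h

lemma dotp_le (a b : Fin n → ℝ) : dotp a b ≤ vnorm a * vnorm b := by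
  have h1 : dotp a b ≤ Real.sqrt ((dotp a b) ^ 2) := by
    rw [Real.sqrt_sq_eq_abs]; exact le_abs_self _
  have h2 := Real.sqrt_le_sqrt (dotp_sq_le a b)
  have h3 : Real.sqrt (dotp a a * dotp b b) = vnorm a * vnorm b := by
    rw [vnorm, vnorm, ← Real.sqrt_mul (dotp_self_nonneg a)]
  linarith

lemma vnorm_add_le (a b : Fin n → ℝ) : vnorm (a + b) ≤ vnorm a + vnorm b := by
  have hd : dotp (a + b) (a + b) = dotp a a + 2 * dotp a b + dotp b b := by
    simp only [dotp, Pi.add_apply, Finset.mul_sum]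
    rw [← Finset.sum_add_distrib, ← Finset.sum_add_distrib]
    exact Finset.sum_congr rfl fun i _ => by ring
  have key : dotp (a + b) (a + b) ≤ (vnorm a + vnorm b) ^ 2 := by
    have h := dotp_le a b
    have ha := vnorm_mul_self a; have hb := vnorm_mul_self b
    nlinarith [vnorm_nonneg a, vnorm_nonneg b]
  calc vnorm (a + b) = Real.sqrt (dotp (a + b) (a + b)) := rfl
    _ ≤ Real.sqrt ((vnorm a + vnorm b) ^ 2) := Real.sqrt_le_sqrt key
    _ = vnorm a + vnorm b := Real.sqrt_sq (add_nonneg (vnorm_nonneg a) (vnorm_nonneg b))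

lemma vnorm_mono {u w : Fin n → ℝ} (h : ∀ j, |u j| ≤ |w j|) : vnorm u ≤ vnorm w := by
  apply Real.sqrt_le_sqrt
  apply Finset.sum_le_sum
  intro i _
  calc u i * u i = |u i| * |u i| := (abs_mul_abs_self _).symm
    _ ≤ |w i| * |w i| := mul_self_le_mul_self (abs_nonneg _) (h i)
    _ = w i * w i := abs_mul_abs_self _

lemma dotp_transpose_mulVec (A : Matrix (Fin m) (Fin n) ℝ) (u : Fin m → ℝ) (v : Fin n → ℝ) :
    dotp (Aᵀ.mulVec u) v = dotp u (A.mulVec v) := by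
  simp only [dotp, Matrix.mulVec, dotProduct, Matrix.transpose_apply,
    Finset.sum_mul, Finset.mul_sum]
  rw [Finset.sum_comm]
  exact Finset.sum_congr rfl fun i _ => Finset.sum_congr rfl fun j _ => by ring

lemma dotp_gram (A B : Matrix (Fin m) (Fin n) ℝ) (u v : Fin n → ℝ) :
    dotp ((Aᵀ * B).mulVec u) v = dotp (B.mulVec u) (A.mulVec v) := by
  rw [← Matrix.mulVec_mulVec, dotp_transpose_mulVec]

lemma normalized_dotp_sq_le (a Δ : Fin n → ℝ) :
    dotp ((vnorm a)⁻¹ • a) Δ * dotp ((vnorm a)⁻¹ • a) Δ ≤ dotp Δ Δ := by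
  rw [dotp_smul_left]
  rcases eq_or_ne (dotp a a) 0 with h | h
  · have hv : vnorm a = 0 := by rw [vnorm, h, Real.sqrt_zero]
    simp [hv, dotp_self_nonneg]
  · have hpos : 0 < dotp a a := (dotp_self_nonneg a).lt_of_ne (Ne.symm h)
    have hvpos : 0 < vnorm a := Real.sqrt_pos.mpr hpos
    have hv : (vnorm a)⁻¹ * (vnorm a)⁻¹ * dotp a a = 1 := by
      rw [← vnorm_mul_self a]; field_simp
    have hcs := dotp_sq_le a Δ
    have hc : 0 ≤ (vnorm a)⁻¹ * (vnorm a)⁻¹ := by positivity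
    nlinarith [mul_le_mul_of_nonneg_left hcs hc, dotp_self_nonneg Δ]


end Helpers

section NetLemmas
variable {n m : ℕ}

lemma wplus_mulVec (Wm : Matrix (Fin m) (Fin n) ℝ) (r v : Fin n → ℝ) (j : Fin m) :
    (Wplus Wm r).mulVec v j = if 0 < Wm.mulVec r j then Wm.mulVec v j else 0 := by
  simp only [Matrix.mulVec, dotProduct, Wplus, Matrix.of_apply]
  split_ifs with h
  · rfl
  · simp

lemma reluVec_eq_wplus (Wm : Matrix (Fin m) (Fin n) ℝ) (r : Fin n → ℝ) :
    reluVec (Wm.mulVec r) = (Wplus Wm r).mulVec r := by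
  funext j
  rw [wplus_mulVec]
  rcases lt_or_ge 0 (Wm.mulVec r j) with h | h
  · simp [reluVec, max_eq_left (le_of_lt h), h]
  · simp [reluVec, max_eq_right h, not_lt.mpr h]

lemma subnet_zero (nn : ℕ → ℕ) (W : ∀ i : ℕ, Matrix (Fin (nn (i + 1))) (Fin (nn i)) ℝ) :
    ∀ j, subnet nn W j 0 = 0
  | 0 => rfl
  | j + 1 => by
    show reluVec ((W j).mulVec (subnet nn W j 0)) = 0
    rw [subnet_zero nn W j]
    funext i
    simp [reluVec, Matrix.mulVec_zero]

lemma ang_comm (r s : Fin n → ℝ) : ang r s = ang s r := by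
  rw [ang, ang, dotp_comm, mul_comm]

lemma ang_self {r : Fin n → ℝ} (hr : r ≠ 0) : ang r r = 0 := by
  rw [ang, vnorm_mul_self, div_self (ne_of_gt (dotp_self_pos hr)), Real.arccos_one]

lemma dotp_outer (u v Δ Γ : Fin n → ℝ) :
    dotp ((outer u v).mulVec Δ) Γ = dotp v Δ * dotp u Γ := by
  simp only [dotp, outer, Matrix.mulVec, dotProduct, Matrix.of_apply,
    Finset.sum_mul, Finset.mul_sum]
  exact Finset.sum_congr rfl fun i _ => Finset.sum_congr rfl fun j _ => by ring

lemma dotp_qmat_self {r : Fin n → ℝ} (hr : r ≠ 0) (Δ : Fin n → ℝ) :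
    dotp ((Qmat r r).mulVec Δ) Δ = 1 / 2 * dotp Δ Δ := by
  rw [Qmat, if_neg (not_or.mpr ⟨hr, hr⟩), ang_self hr, Real.sin_zero, zero_div, zero_smul,
    add_zero, sub_zero, Matrix.smul_mulVec, Matrix.one_mulVec, dotp_smul_left]
  have hc : π / (2 * π) = 1 / 2 := by
    rw [div_eq_div_iff (by positivity) (by norm_num)]; ring
  rw [hc]

lemma dotp_qmat_lower {r s : Fin n → ℝ} (hr : r ≠ 0) (hs : s ≠ 0) (Δ : Fin n → ℝ) :
    ((π - ang r s) / (2 * π)) * dotp Δ Δ - (Real.sin (ang r s) / (2 * π)) * dotp Δ Δ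
      ≤ dotp ((Qmat r s).mulVec Δ) Δ := by
  have hθ0 : 0 ≤ ang r s := Real.arccos_nonneg _
  have hθπ : ang r s ≤ π := Real.arccos_le_pi _
  have hsin : 0 ≤ Real.sin (ang r s) := Real.sin_nonneg_of_nonneg_of_le_pi hθ0 hθπ
  have hc2 : 0 ≤ Real.sin (ang r s) / (2 * π) := div_nonneg hsin (by positivity)
  rw [Qmat, if_neg (not_or.mpr ⟨hr, hs⟩), Mswap, Matrix.add_mulVec,
    Matrix.smul_mulVec, Matrix.smul_mulVec, Matrix.one_mulVec,
    dotp_add_left, dotp_smul_left, dotp_smul_left, Matrix.sub_mulVec, dotp_sub_left,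
    dotp_outer, dotp_outer]
  have h1 : 0 ≤ dotp ((vnorm ((vnorm r)⁻¹ • r + (vnorm s)⁻¹ • s))⁻¹ •
      ((vnorm r)⁻¹ • r + (vnorm s)⁻¹ • s)) Δ *
      dotp ((vnorm ((vnorm r)⁻¹ • r + (vnorm s)⁻¹ • s))⁻¹ •
      ((vnorm r)⁻¹ • r + (vnorm s)⁻¹ • s)) Δ := mul_self_nonneg _
  have h2 := normalized_dotp_sq_le ((vnorm r)⁻¹ • r - (vnorm s)⁻¹ • s) Δ
  nlinarith [mul_le_mul_of_nonneg_left h2 hc2]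

lemma subnet_ne_zero (nn : ℕ → ℕ) (d : ℕ)
    (W : ∀ i : ℕ, Matrix (Fin (nn (i + 1))) (Fin (nn i)) ℝ) (ε : ℝ)
    (hε2 : ε < 1 / 2) (hG : R2WDCond nn d W ε) :
    ∀ i, i ≤ d → ∀ x : Fin (nn 0) → ℝ, x ≠ 0 → subnet nn W i x ≠ 0 := by
  intro i
  induction i with
  | zero => exact fun _ x hx => hx
  | succ i ih =>
    intro hle x hx
    have hid : i < d := lt_of_lt_of_le (Nat.lt_succ_self i) hle
    have hr : subnet nn W i x ≠ 0 := ih (le_of_lt hid) x hx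
    have hcond := hG i hid x x x 0 x 0
    rw [subnet_zero, sub_zero, Matrix.sub_mulVec, dotp_sub_left,
      dotp_qmat_self hr, dotp_gram] at hcond
    have habs := (abs_le.mp hcond).1
    have hD := dotp_self_pos hr
    have hv := vnorm_mul_self (subnet nn W i x)
    have hpos : 0 < dotp ((Wplus (W i) (subnet nn W i x)).mulVec (subnet nn W i x))
        ((Wplus (W i) (subnet nn W i x)).mulVec (subnet nn W i x)) := by nlinarith
    intro h0
    have h0' : (Wplus (W i) (subnet nn W i x)).mulVec (subnet nn W i x) = 0 := by
      rw [← reluVec_eq_wplus]; exact h0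
    rw [h0'] at hpos
    simp [dotp] at hpos

end NetLemmas

set_option maxHeartbeats 1000000 in
theorem statement19 (nn : ℕ → ℕ) (d : ℕ)
    (W : ∀ i : ℕ, Matrix (Fin (nn (i + 1))) (Fin (nn i)) ℝ) (ε : ℝ)
    (hε : 0 < ε) (hεd : 2 * (d : ℝ) * ε < 1) (hε10 : 10 * ε < 1)
    (hG : R2WDCond nn d W ε) :
    ∀ x y : Fin (nn 0) → ℝ, x ≠ 0 → y ≠ 0 → ∀ i : ℕ, i < d →
      vnorm (subnet nn W (i + 1) x - subnet nn W (i + 1) y) ≤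
        (Real.sqrt (1 / 2 + ε) +
            Real.sqrt (2 * (2 * ε + ang (subnet nn W i x) (subnet nn W i y)))) *
          vnorm (subnet nn W i x - subnet nn W i y) := by
  intro x y hx hy i hid
  have hε2 : ε < 1 / 2 := by linarith
  set r := subnet nn W i x with hr'
  set s := subnet nn W i y with hs'
  have hr : r ≠ 0 := subnet_ne_zero nn d W ε hε2 hG i (le_of_lt hid) x hx
  have hs : s ≠ 0 := subnet_ne_zero nn d W ε hε2 hG i (le_of_lt hid) y hy
  have hθ0 : 0 ≤ ang r s := Real.arccos_nonneg _
  have hθπ : ang r s ≤ π := Real.arccos_le_pi _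
  have hsin0 : 0 ≤ Real.sin (ang r s) := Real.sin_nonneg_of_nonneg_of_le_pi hθ0 hθπ
  have hsinθ : Real.sin (ang r s) ≤ ang r s := Real.sin_le hθ0
  have hπ : (3 : ℝ) < π := Real.pi_gt_three
  set Δ := r - s with hΔ'
  have hΔD : vnorm Δ * vnorm Δ = dotp Δ Δ := vnorm_mul_self Δ
  have hE : ε * vnorm Δ * vnorm Δ = ε * dotp Δ Δ := by rw [mul_assoc, hΔD]
  have hDn : 0 ≤ dotp Δ Δ := dotp_self_nonneg Δ
  -- R2WDC instances
  have h11 := hG i hid x x x y x y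
  have h12 := hG i hid x y x y x y
  have h21 := hG i hid y x x y x y
  have h22 := hG i hid y y x y x y
  rw [← hr', ← hs', ← hΔ'] at h11 h12 h21 h22
  rw [Matrix.sub_mulVec, dotp_sub_left, dotp_qmat_self hr, dotp_gram] at h11
  rw [Matrix.sub_mulVec, dotp_sub_left, dotp_gram] at h12
  rw [Matrix.sub_mulVec, dotp_sub_left, dotp_gram] at h21
  rw [Matrix.sub_mulVec, dotp_sub_left, dotp_qmat_self hs, dotp_gram] at h22
  -- decomposition
  have hdec : subnet nn W (i + 1) x - subnet nn W (i + 1) y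
      = (Wplus (W i) r).mulVec Δ + (Wplus (W i) r - Wplus (W i) s).mulVec s := by
    show reluVec ((W i).mulVec r) - reluVec ((W i).mulVec s) = _
    rw [reluVec_eq_wplus, reluVec_eq_wplus, hΔ', Matrix.mulVec_sub, Matrix.sub_mulVec]
    abel
  -- bound A
  have hA : vnorm ((Wplus (W i) r).mulVec Δ) ≤ Real.sqrt (1 / 2 + ε) * vnorm Δ := by
    have h1 := (abs_le.mp h11).2
    have hsq : dotp ((Wplus (W i) r).mulVec Δ) ((Wplus (W i) r).mulVec Δ)
        ≤ (1 / 2 + ε) * (vnorm Δ * vnorm Δ) := by nlinarith [hE, hΔD, h1]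
    calc vnorm ((Wplus (W i) r).mulVec Δ)
        = Real.sqrt (dotp ((Wplus (W i) r).mulVec Δ) ((Wplus (W i) r).mulVec Δ)) := rfl
      _ ≤ Real.sqrt ((1 / 2 + ε) * (vnorm Δ * vnorm Δ)) := Real.sqrt_le_sqrt hsq
      _ = Real.sqrt (1 / 2 + ε) * vnorm Δ := by
          rw [Real.sqrt_mul (by linarith) (vnorm Δ * vnorm Δ),
            Real.sqrt_mul_self (vnorm_nonneg Δ)]
  -- bound B1 : entrywise comparison
  have hB1 : vnorm ((Wplus (W i) r - Wplus (W i) s).mulVec s)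
      ≤ vnorm ((Wplus (W i) r - Wplus (W i) s).mulVec Δ) := by
    apply vnorm_mono
    intro j
    have e1 : ∀ v : Fin (nn i) → ℝ, (Wplus (W i) r - Wplus (W i) s).mulVec v j
        = (if 0 < (W i).mulVec r j then (W i).mulVec v j else 0)
          - (if 0 < (W i).mulVec s j then (W i).mulVec v j else 0) := by
      intro v
      rw [Matrix.sub_mulVec]
      simp only [Pi.sub_apply]
      rw [wplus_mulVec, wplus_mulVec]
    rw [e1, e1]
    have eΔ : (W i).mulVec Δ j = (W i).mulVec r j - (W i).mulVec s j := by
      rw [hΔ', Matrix.mulVec_sub]; rfl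
    rw [eΔ]
    split_ifs with ha hb hb
    · simp
    · rw [sub_zero, sub_zero, abs_of_nonpos (not_lt.mp hb),
        abs_of_pos (by linarith [not_lt.mp hb] : (0:ℝ) < (W i).mulVec r j - (W i).mulVec s j)]
      linarith [not_lt.mp hb]
    · rw [zero_sub, zero_sub, abs_neg, abs_neg, abs_of_pos hb,
        abs_of_nonpos (by linarith [not_lt.mp ha] : (W i).mulVec r j - (W i).mulVec s j ≤ 0)]
      linarith [not_lt.mp ha]
    · simp
  -- bound B2
  have hB2 : vnorm ((Wplus (W i) r - Wplus (W i) s).mulVec Δ)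
      ≤ Real.sqrt (2 * (2 * ε + ang r s)) * vnorm Δ := by
    have hexp : dotp ((Wplus (W i) r - Wplus (W i) s).mulVec Δ)
        ((Wplus (W i) r - Wplus (W i) s).mulVec Δ)
        = dotp ((Wplus (W i) r).mulVec Δ) ((Wplus (W i) r).mulVec Δ)
          - dotp ((Wplus (W i) s).mulVec Δ) ((Wplus (W i) r).mulVec Δ)
          - dotp ((Wplus (W i) r).mulVec Δ) ((Wplus (W i) s).mulVec Δ)
          + dotp ((Wplus (W i) s).mulVec Δ) ((Wplus (W i) s).mulVec Δ) := by
      rw [Matrix.sub_mulVec, dotp_sub_left, dotp_sub_right, dotp_sub_right]; ring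
    have h12' := (abs_le.mp h12).1
    have h21' := (abs_le.mp h21).1
    have h11' := (abs_le.mp h11).2
    have h22' := (abs_le.mp h22).2
    have hq12 := dotp_qmat_lower hr hs Δ
    have hq21 := dotp_qmat_lower hs hr Δ
    rw [ang_comm s r] at hq21
    have hfrac : 1 / 2 - ang r s
        ≤ (π - ang r s) / (2 * π) - Real.sin (ang r s) / (2 * π) := by
      rw [div_sub_div_same, le_div_iff₀ (by positivity)]
      nlinarith [mul_nonneg hθ0 (by linarith : (0:ℝ) ≤ π - 1)]
    have hq12' : (1 / 2 - ang r s) * dotp Δ Δ ≤ dotp ((Qmat r s).mulVec Δ) Δ := by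
      linarith [mul_le_mul_of_nonneg_right hfrac hDn, hq12]
    have hq21' : (1 / 2 - ang r s) * dotp Δ Δ ≤ dotp ((Qmat s r).mulVec Δ) Δ := by
      linarith [mul_le_mul_of_nonneg_right hfrac hDn, hq21]
    have hsq : dotp ((Wplus (W i) r - Wplus (W i) s).mulVec Δ)
        ((Wplus (W i) r - Wplus (W i) s).mulVec Δ)
        ≤ (2 * (2 * ε + ang r s)) * (vnorm Δ * vnorm Δ) := by
      rw [hexp, hΔD]
      linarith [h11', h22', h12', h21', hq12', hq21', hE]
    calc vnorm ((Wplus (W i) r - Wplus (W i) s).mulVec Δ)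
        = Real.sqrt (dotp ((Wplus (W i) r - Wplus (W i) s).mulVec Δ)
            ((Wplus (W i) r - Wplus (W i) s).mulVec Δ)) := rfl
      _ ≤ Real.sqrt ((2 * (2 * ε + ang r s)) * (vnorm Δ * vnorm Δ)) := Real.sqrt_le_sqrt hsq
      _ = Real.sqrt (2 * (2 * ε + ang r s)) * vnorm Δ := by
          rw [Real.sqrt_mul (by linarith) (vnorm Δ * vnorm Δ),
            Real.sqrt_mul_self (vnorm_nonneg Δ)]
  rw [hdec]
  calc vnorm ((Wplus (W i) r).mulVec Δ + (Wplus (W i) r - Wplus (W i) s).mulVec s)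
      ≤ vnorm ((Wplus (W i) r).mulVec Δ)
        + vnorm ((Wplus (W i) r - Wplus (W i) s).mulVec s) := vnorm_add_le _ _
    _ ≤ Real.sqrt (1 / 2 + ε) * vnorm Δ + Real.sqrt (2 * (2 * ε + ang r s)) * vnorm Δ :=
        add_le_add hA (hB1.trans hB2)
    _ = (Real.sqrt (1 / 2 + ε) + Real.sqrt (2 * (2 * ε + ang r s))) * vnorm Δ := by ring

end R2WDCFormal
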